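/- Let A¹,…,A^d be D×D complex matrices with Σᵢ Aⁱ(Aⁱ)† = 𝟙, let Λ be a positive definite D×D matrix fixed by the right map: Σᵢ AⁱΛ(Aⁱ)† = Λ. Let B¹,…,B^d be D'×D' matrices whose induced left map has spectral radius ≤ 1 in the sense that Σⱼ Tr(Bʲ Y (Bʲ)†) ≤ Tr(Y) for all positive semidefinite Y. If X is a D'×D matrix with Σᵢ (Bⁱ)† X Aⁱ = λX for some λ ∈ ℂ and X ≠ 0, then |λ| ≤ 1. -/

import Mathlib

/-!
Put `Y = X Λ Xᴴ`. The eigenvalue equation and cyclicity of the trace give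
`λ Tr Y = ∑ᵢ Tr((X Aⁱ) Λ (Bⁱ X)ᴴ)`. Since `Λ ≥ 0`, `⟪M, N⟫ = ∑ᵢ Tr(Nᵢ Λ Mᵢᴴ)` is a positive
semidefinite Hermitian form on tuples of matrices, and Cauchy–Schwarz bounds `|λ|² (Tr Y)²` by
`Tr(X (∑ᵢ Aⁱ Λ Aⁱᴴ) Xᴴ) · Tr(∑ᵢ Bⁱ Y Bⁱᴴ) ≤ Tr Y · Tr Y`. As `Λ > 0` and `X ≠ 0`, `Tr Y > 0`.
-/

open Matrix
open scoped ComplexOrder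

namespace Matrix

variable {𝕜 ι m n : Type*} [RCLike 𝕜] [Fintype ι] [Fintype m] [Fintype n]

abbrev weightedHilbertSchmidtCore {Λ : Matrix n n 𝕜} (hΛ : Λ.PosSemidef) :
    PreInnerProductSpace.Core 𝕜 (ι → Matrix m n 𝕜) where
  inner M N := ∑ i, (N i * Λ * (M i)ᴴ).trace
  conj_inner_symm M N := by
    simp only [map_sum, starRingEnd_apply, ← trace_conjTranspose, conjTranspose_mul,
      conjTranspose_conjTranspose, hΛ.isHermitian.eq, Matrix.mul_assoc]
  re_inner_nonneg M := by
    rw [map_sum]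
    exact Finset.sum_nonneg fun i _ =>
      (RCLike.nonneg_iff.mp (hΛ.mul_mul_conjTranspose_same (M i)).trace_nonneg).1
  add_left M M' N := by simp [Matrix.mul_add, Finset.sum_add_distrib]
  smul_left M N c := by simp [Finset.mul_sum]

theorem norm_sum_trace_mul_mul_conjTranspose_sq_le {Λ : Matrix n n 𝕜} (hΛ : Λ.PosSemidef)
    (M N : ι → Matrix m n 𝕜) :
    ‖∑ i, (M i * Λ * (N i)ᴴ).trace‖ ^ 2 ≤
      RCLike.re (∑ i, (M i * Λ * (M i)ᴴ).trace) * RCLike.re (∑ i, (N i * Λ * (N i)ᴴ).trace) := by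
  let := weightedHilbertSchmidtCore (ι := ι) (m := m) hΛ
  have := InnerProductSpace.Core.inner_mul_inner_self_le (𝕜 := 𝕜) M N
  rwa [InnerProductSpace.Core.norm_inner_symm M N, ← sq] at this

theorem PosDef.mul_mul_conjTranspose_eq_zero_iff {Λ : Matrix n n 𝕜} (hΛ : Λ.PosDef)
    {X : Matrix m n 𝕜} : X * Λ * Xᴴ = 0 ↔ X = 0 := by
  classical
  refine ⟨fun h => ?_, fun h => by simp [h]⟩
  rw [← conjTranspose_eq_zero]
  by_contra hX
  obtain ⟨x, hx⟩ : ∃ x, Xᴴ *ᵥ x ≠ 0 := by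
    by_contra! hzero
    exact hX (ext_of_mulVec_single fun j => by rw [hzero, zero_mulVec])
  have := hΛ.dotProduct_mulVec_pos hx
  rw [star_mulVec, conjTranspose_conjTranspose, dotProduct_mulVec, vecMul_vecMul,
    ← dotProduct_mulVec, mulVec_mulVec, h] at this
  simp at this

theorem PosDef.trace_mul_mul_conjTranspose_pos {Λ : Matrix n n 𝕜} (hΛ : Λ.PosDef)
    {X : Matrix m n 𝕜} (hX : X ≠ 0) : 0 < RCLike.re (X * Λ * Xᴴ).trace := by
  have hY := hΛ.posSemidef.mul_mul_conjTranspose_same X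
  have : (X * Λ * Xᴴ).trace ≠ 0 := by
    rwa [Ne, hY.trace_eq_zero_iff, hΛ.mul_mul_conjTranspose_eq_zero_iff]
  exact (RCLike.pos_iff.mp (hY.trace_nonneg.lt_of_ne' this)).1

theorem sq_norm_mul_norm_trace_le_of_sum_conjTranspose_mul_mul_eq_smul
    {A : ι → Matrix n n 𝕜} {B : ι → Matrix m m 𝕜} {Λ : Matrix n n 𝕜} (hΛ : Λ.PosSemidef)
    {X : Matrix m n 𝕜} {lam : 𝕜} (heig : ∑ i, (B i)ᴴ * X * A i = lam • X) :
    (‖lam‖ * ‖(X * Λ * Xᴴ).trace‖) ^ 2 ≤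
      RCLike.re (X * (∑ i, A i * Λ * (A i)ᴴ) * Xᴴ).trace *
        RCLike.re (∑ i, B i * (X * Λ * Xᴴ) * (B i)ᴴ).trace := by
  have hmixed : ∑ i, (X * A i * Λ * (B i * X)ᴴ).trace = lam * (X * Λ * Xᴴ).trace :=
    calc ∑ i, (X * A i * Λ * (B i * X)ᴴ).trace
        = ∑ i, ((B i)ᴴ * X * A i * (Λ * Xᴴ)).trace := by
          refine Finset.sum_congr rfl fun i _ => ?_
          rw [conjTranspose_mul, ← Matrix.mul_assoc, trace_mul_comm]
          simp only [Matrix.mul_assoc]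
      _ = lam * (X * Λ * Xᴴ).trace := by
          rw [← trace_sum, ← Matrix.sum_mul, heig, smul_mul, trace_smul, smul_eq_mul,
            ← Matrix.mul_assoc]
  have hleft : ∑ i, (X * A i * Λ * (X * A i)ᴴ).trace =
      (X * (∑ i, A i * Λ * (A i)ᴴ) * Xᴴ).trace := by
    simp only [conjTranspose_mul, Matrix.mul_sum, Matrix.sum_mul, Matrix.mul_assoc, trace_sum]
  have hright : ∑ i, (B i * X * Λ * (B i * X)ᴴ).trace =
      (∑ i, B i * (X * Λ * Xᴴ) * (B i)ᴴ).trace := by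
    simp only [conjTranspose_mul, Matrix.mul_assoc, trace_sum]
  rw [← norm_mul, ← hmixed, ← hleft, ← hright]
  exact norm_sum_trace_mul_mul_conjTranspose_sq_le hΛ (fun i => X * A i) (fun i => B i * X)

end Matrix

theorem stmt10_general (d D D' : ℕ)
    (A : Fin d → Matrix (Fin D) (Fin D) ℂ)
    (B : Fin d → Matrix (Fin D') (Fin D') ℂ)
    (Λ : Matrix (Fin D) (Fin D) ℂ) (hΛ : Λ.PosDef)
    (hfix : ∑ i, A i * Λ * (A i)ᴴ = Λ)
    (hB : ∀ Y : Matrix (Fin D') (Fin D') ℂ, Y.PosSemidef →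
      (∑ j, B j * Y * (B j)ᴴ).trace.re ≤ Y.trace.re)
    (X : Matrix (Fin D') (Fin D) ℂ) (hX0 : X ≠ 0)
    (lam : ℂ) (heig : ∑ i, (B i)ᴴ * X * A i = lam • X) :
    ‖lam‖ ≤ 1 := by
  have hCS := sq_norm_mul_norm_trace_le_of_sum_conjTranspose_mul_mul_eq_smul hΛ.posSemidef heig
  rw [hfix] at hCS
  set Y := X * Λ * Xᴴ
  have hY : 0 < Y.trace.re := hΛ.trace_mul_mul_conjTranspose_pos hX0
  have hYB := hB Y (hΛ.posSemidef.mul_mul_conjTranspose_same X)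
  have hsq : (‖lam‖ * Y.trace.re) ^ 2 ≤ Y.trace.re ^ 2 :=
    calc (‖lam‖ * Y.trace.re) ^ 2 ≤ (‖lam‖ * ‖Y.trace‖) ^ 2 := by
          gcongr; exact Complex.re_le_norm _
      _ ≤ Y.trace.re * (∑ i, B i * Y * (B i)ᴴ).trace.re := hCS
      _ ≤ Y.trace.re ^ 2 := by rw [sq]; exact mul_le_mul_of_nonneg_left hYB hY.le
  have := (pow_le_pow_iff_left₀ (by positivity) hY.le two_ne_zero).1 hsq
  exact le_of_mul_le_mul_right (by rwa [one_mul]) hY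

/-- Mixed transfer matrix eigenvalue bound: if `Σᵢ AⁱΛ(Aⁱ)† = Λ` with `Λ`
positive definite and `Σᵢ Aⁱ(Aⁱ)† = 𝟙`, the induced left map of the `Bʲ`
does not increase traces of positive semidefinite matrices, and
`Σᵢ (Bⁱ)† X Aⁱ = λ X` with `X ≠ 0`, then `|λ| ≤ 1`. -/
theorem stmt10 (d D D' : ℕ)
    (A : Fin d → Matrix (Fin D) (Fin D) ℂ)
    (B : Fin d → Matrix (Fin D') (Fin D') ℂ)
    (hrc : ∑ i, A i * (A i)ᴴ = 1)
    (Λ : Matrix (Fin D) (Fin D) ℂ) (hΛ : Λ.PosDef)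
    (hfix : ∑ i, A i * Λ * (A i)ᴴ = Λ)
    (hB : ∀ Y : Matrix (Fin D') (Fin D') ℂ, Y.PosSemidef →
      (∑ j, B j * Y * (B j)ᴴ).trace.re ≤ Y.trace.re)
    (X : Matrix (Fin D') (Fin D) ℂ) (hX0 : X ≠ 0)
    (lam : ℂ) (heig : ∑ i, (B i)ᴴ * X * A i = lam • X) :
    ‖lam‖ ≤ 1 :=
  stmt10_general d D D' A B Λ hΛ hfix hB X hX0 lam heig
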